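/- arXiv:2602.16280 — 2 statements merged into one kernel-verified Lean document; each statement's English description precedes it below -/
import Mathlib

section
/- Let ρ be a two-rebit state with a separable tomographically-local projection: Π_TL(ρ) = Σ_k p_k • (A_k ⊗ₖ B_k) with weights p_k ≥ 0 summing to 1 and real symmetric positive semidefinite trace-one 2×2 matrices A_k, B_k. For a 4×4 matrix M indexed by Fin 2 × Fin 2, let Tr_A(M) denote the 2×2 matrix with entries (Tr_A M)_{j j'} = Σ_i M_{(i,j),(i,j')}. Then for every real symmetric 2×2 matrix E, the conditional state of the second rebit admits a local-hidden-state decomposition: Tr_A((E ⊗ₖ I₂) * ρ) = Σ_k p_k · trace(A_k * E) • B_k. Hence ρ is useless for steering. -/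
open Matrix Kronecker

/-- The real 2×2 matrix with rows (0, −1) and (1, 0). -/
noncomputable def y : Matrix (Fin 2) (Fin 2) ℝ := !![0, -1; 1, 0]

/-- The real 4×4 matrix representing σ_y ⊗ σ_y. -/
noncomputable def Y₄ : Matrix (Fin 2 × Fin 2) (Fin 2 × Fin 2) ℝ := -(y ⊗ₖ y)

/-- A two-rebit state: a real symmetric positive semidefinite 4×4 matrix of trace 1. -/
def IsTwoRebitState (ρ : Matrix (Fin 2 × Fin 2) (Fin 2 × Fin 2) ℝ) : Prop :=
  ρ.IsSymm ∧ ρ.PosSemidef ∧ ρ.trace = 1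

/-- The tomographically local projection Π_TL on two-rebit matrices. -/
noncomputable def PiTL (ρ : Matrix (Fin 2 × Fin 2) (Fin 2 × Fin 2) ℝ) :
    Matrix (Fin 2 × Fin 2) (Fin 2 × Fin 2) ℝ :=
  ρ - ((1 / 4 : ℝ) * (ρ * Y₄).trace) • Y₄

/-- Partial trace over the first rebit: (Tr_A M)_{j j'} = Σ_i M_{(i,j),(i,j')}. -/
noncomputable def trA (M : Matrix (Fin 2 × Fin 2) (Fin 2 × Fin 2) ℝ) :
    Matrix (Fin 2) (Fin 2) ℝ :=
  Matrix.of fun j j' => ∑ i : Fin 2, M (i, j) (i, j')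

/-! Tomographically nonlocal terms are proportional to `Y₄ = -(y ⊗ₖ y)` with `y` antisymmetric,
and a local effect `E ⊗ₖ 1` with `E` symmetric only sees them through `trace (E * y) = 0`. The
rest of `ρ` is `Π_TL ρ = ∑ₖ pₖ • (Aₖ ⊗ₖ Bₖ)`, whose conditional states are `∑ₖ pₖ trace (Aₖ E) • Bₖ`
because `trA` is linear and `trA (M ⊗ₖ N) = trace M • N`. -/

theorem Matrix.trace_mul_eq_zero_of_isSymm_of_transpose_eq_neg {n R : Type*} [Fintype n]
    [CommRing R] [NoZeroDivisors R] [CharZero R] {E S : Matrix n n R}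
    (hE : E.IsSymm) (hS : Sᵀ = -S) : (E * S).trace = 0 := by
  rw [← CharZero.eq_neg_self_iff]
  calc (E * S).trace = (E * S)ᵀ.trace := (trace_transpose _).symm
    _ = -(E * S).trace := by rw [transpose_mul, hS, hE.eq, neg_mul, trace_neg, trace_mul_comm]

lemma y_transpose : yᵀ = -y := by
  ext i j; fin_cases i <;> fin_cases j <;> simp [y]

noncomputable def trALinearMap :
    Matrix (Fin 2 × Fin 2) (Fin 2 × Fin 2) ℝ →ₗ[ℝ] Matrix (Fin 2) (Fin 2) ℝ where
  toFun := trA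
  map_add' M N := by ext; simp [trA, Finset.sum_add_distrib]
  map_smul' r M := by ext; simp [trA, mul_add]

lemma trA_kronecker (M N : Matrix (Fin 2) (Fin 2) ℝ) : trA (M ⊗ₖ N) = M.trace • N := by
  ext j j'
  simp [trA, trace, add_mul]

/-- The unnormalised state of the second rebit after the first one yields the effect `E`. -/
noncomputable def steeredState (E : Matrix (Fin 2) (Fin 2) ℝ) :
    Matrix (Fin 2 × Fin 2) (Fin 2 × Fin 2) ℝ →ₗ[ℝ] Matrix (Fin 2) (Fin 2) ℝ :=
  trALinearMap ∘ₗ LinearMap.mulLeft ℝ (E ⊗ₖ (1 : Matrix (Fin 2) (Fin 2) ℝ))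

lemma steeredState_apply (E : Matrix (Fin 2) (Fin 2) ℝ)
    (M : Matrix (Fin 2 × Fin 2) (Fin 2 × Fin 2) ℝ) :
    steeredState E M = trA ((E ⊗ₖ (1 : Matrix (Fin 2) (Fin 2) ℝ)) * M) :=
  rfl

lemma steeredState_kronecker (E A B : Matrix (Fin 2) (Fin 2) ℝ) :
    steeredState E (A ⊗ₖ B) = (A * E).trace • B := by
  rw [steeredState_apply, ← mul_kronecker_mul, one_mul, trA_kronecker, trace_mul_comm]

lemma steeredState_Y₄ {E : Matrix (Fin 2) (Fin 2) ℝ} (hE : E.IsSymm) : steeredState E Y₄ = 0 := by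
  rw [Y₄, map_neg, steeredState_kronecker,
    trace_mul_comm, trace_mul_eq_zero_of_isSymm_of_transpose_eq_neg hE y_transpose, zero_smul,
    neg_zero]

theorem stmt12_general (ρ : Matrix (Fin 2 × Fin 2) (Fin 2 × Fin 2) ℝ)
    (n : ℕ) (p : Fin n → ℝ) (A B : Fin n → Matrix (Fin 2) (Fin 2) ℝ)
    (hdec : PiTL ρ = ∑ k, p k • (A k ⊗ₖ B k)) :
    ∀ E : Matrix (Fin 2) (Fin 2) ℝ, E.IsSymm →
      trA ((E ⊗ₖ (1 : Matrix (Fin 2) (Fin 2) ℝ)) * ρ)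
        = ∑ k, (p k * (A k * E).trace) • B k := by
  intro E hE
  obtain ⟨c, hsplit⟩ : ∃ c : ℝ, ρ = ∑ k, p k • (A k ⊗ₖ B k) + c • Y₄ :=
    ⟨_, by rw [← hdec, PiTL, sub_add_cancel]⟩
  simp only [← steeredState_apply, hsplit, map_add, map_sum, map_smul, steeredState_kronecker,
    steeredState_Y₄ hE, smul_zero, add_zero, smul_smul]

/-- **Proposition 10 of the paper (in real quantum theory):
tomographically-nonlocal entanglement is useless for steering.**
If the tomographically-local projection of a two-rebit state is separable,
then the conditional states on the second rebit obtained by measuring any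
local effect `E` on the first rebit admit a local-hidden-state decomposition. -/
theorem stmt12 (ρ : Matrix (Fin 2 × Fin 2) (Fin 2 × Fin 2) ℝ)
    (hρ : IsTwoRebitState ρ)
    (n : ℕ) (p : Fin n → ℝ) (A B : Fin n → Matrix (Fin 2) (Fin 2) ℝ)
    (hp : ∀ k, 0 ≤ p k) (hps : (∑ k, p k) = 1)
    (hA : ∀ k, (A k).IsSymm ∧ (A k).PosSemidef ∧ (A k).trace = 1)
    (hB : ∀ k, (B k).IsSymm ∧ (B k).PosSemidef ∧ (B k).trace = 1)
    (hdec : PiTL ρ = ∑ k, p k • (A k ⊗ₖ B k)) :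
    ∀ E : Matrix (Fin 2) (Fin 2) ℝ, E.IsSymm →
      trA ((E ⊗ₖ (1 : Matrix (Fin 2) (Fin 2) ℝ)) * ρ)
        = ∑ k, (p k * (A k * E).trace) • B k :=
  stmt12_general ρ n p A B hdec
end

section
/- Suppose ω₀ and ω₁ are two-rebit states such that trace(ω₀ * (E ⊗ₖ F)) = trace(ω₁ * (E ⊗ₖ F)) for all real symmetric 2×2 matrices E and F (no product effect can distinguish them), and suppose there exists a measurement perfectly distinguishing them: real symmetric positive semidefinite 4×4 matrices e₀, e₁ with e₀ + e₁ = I₄ and trace(e_i * ω_x) = 1 if i = x and 0 otherwise (x, i ∈ {0,1}). Then ω₀ − ω₁ = c • Y₄ for some nonzero real c; in particular trace(ω₀ * Y₄) ≠ trace(ω₁ * Y₄), so at least one of ω₀, ω₁ has a nonzero Y₄ component, i.e., carries tomographically-nonlocal entanglement. -/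
open Matrix Kronecker

/-!
The difference Δ = ω₀ - ω₁ is symmetric and trace-orthogonal to every `E ⊗ₖ F` with `E`, `F`
symmetric. Testing against symmetrised matrix units shows that Δ is antisymmetric in the indices
of the second tensor factor, hence, Δ being symmetric, also in those of the first; on `ℝ² ⊗ ℝ²`
such a matrix is a multiple of `y ⊗ₖ y`. The perfectly distinguishing effect `e₀` forces `Δ ≠ 0`,
and since `Y₄ * Y₄ = 1` the coefficient is `trace (Δ * Y₄) / 4`.
-/

section
variable {m n R : Type*} [DecidableEq m] [DecidableEq n]

lemma isSymm_single_add_single [AddCommMonoid R] (i j : m) (a : R) :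
    (single i j a + single j i a).IsSymm := by
  simp [IsSymm, transpose_single, add_comm]

variable [Fintype m] [Fintype n]

lemma trace_mul_single_kronecker_single [CommSemiring R] (Δ : Matrix (m × n) (m × n) R)
    (i j : m) (k l : n) :
    (Δ * (single i j (1 : R) ⊗ₖ single k l 1)).trace = Δ (j, l) (i, k) := by
  simp [single_kronecker_single, trace_mul_single]

lemma apply_eq_neg_of_trace_mul_kronecker_eq_zero [Field R] [CharZero R]
    {Δ : Matrix (m × n) (m × n) R} (hΔ : Δ.IsSymm)
    (h : ∀ (E : Matrix m m R) (F : Matrix n n R), E.IsSymm → F.IsSymm →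
      (Δ * (E ⊗ₖ F)).trace = 0) (i j : m) (k l : n) :
    Δ (i, k) (j, l) = -Δ (i, l) (j, k) := by
  have key := h _ _ (isSymm_single_add_single i j (1 : R)) (isSymm_single_add_single k l 1)
  simp only [add_kronecker, kronecker_add, mul_add, trace_add,
    trace_mul_single_kronecker_single] at key
  linear_combination key / 2 - (hΔ.apply (i, k) (j, l) + hΔ.apply (i, l) (j, k)) / 2

end

lemma eq_smul_Y₄_of_isSymm_of_apply_eq_neg {Δ : Matrix (Fin 2 × Fin 2) (Fin 2 × Fin 2) ℝ}
    (hΔ : Δ.IsSymm) (h : ∀ i j k l, Δ (i, k) (j, l) = -Δ (i, l) (j, k)) :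
    Δ = Δ (0, 1) (1, 0) • Y₄ := by
  ext ⟨i, k⟩ ⟨j, l⟩
  have h₁ := h i j k l
  have h₂ := h j i k l
  have s₁ := hΔ.apply (i, k) (j, l)
  have s₂ := hΔ.apply (i, l) (j, k)
  have s₃ := hΔ.apply (0, 1) (1, 0)
  fin_cases i <;> fin_cases j <;> fin_cases k <;> fin_cases l <;>
    simp [Y₄, y] at * <;> linarith

lemma Y₄_mul_self : Y₄ * Y₄ = 1 := by
  have hy : y * y = -1 := by
    ext i j; fin_cases i <;> fin_cases j <;> simp [y]
  rw [Y₄, neg_mul_neg, ← mul_kronecker_mul, hy, ← neg_one_smul ℝ (1 : Matrix (Fin 2) (Fin 2) ℝ),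
    smul_kronecker, kronecker_smul, one_kronecker_one, smul_smul]
  norm_num

lemma eq_smul_Y₄_of_trace_mul_kronecker_eq_zero {Δ : Matrix (Fin 2 × Fin 2) (Fin 2 × Fin 2) ℝ}
    (hΔ : Δ.IsSymm)
    (h : ∀ E F : Matrix (Fin 2) (Fin 2) ℝ, E.IsSymm → F.IsSymm → (Δ * (E ⊗ₖ F)).trace = 0) :
    Δ = Δ (0, 1) (1, 0) • Y₄ :=
  eq_smul_Y₄_of_isSymm_of_apply_eq_neg hΔ (apply_eq_neg_of_trace_mul_kronecker_eq_zero hΔ h)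

theorem stmt14_general (ω₀ ω₁ : Matrix (Fin 2 × Fin 2) (Fin 2 × Fin 2) ℝ)
    (h₀ : IsTwoRebitState ω₀) (h₁ : IsTwoRebitState ω₁)
    (hprod : ∀ E F : Matrix (Fin 2) (Fin 2) ℝ, E.IsSymm → F.IsSymm →
      (ω₀ * (E ⊗ₖ F)).trace = (ω₁ * (E ⊗ₖ F)).trace)
    (e₀ : Matrix (Fin 2 × Fin 2) (Fin 2 × Fin 2) ℝ)
    (hd₀₀ : (e₀ * ω₀).trace = 1) (hd₀₁ : (e₀ * ω₁).trace = 0) :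
    (∃ c : ℝ, c ≠ 0 ∧ ω₀ - ω₁ = c • Y₄) ∧
      (ω₀ * Y₄).trace ≠ (ω₁ * Y₄).trace := by
  set c := (ω₀ - ω₁) (0, 1) (1, 0)
  have hΔ : ω₀ - ω₁ = c • Y₄ :=
    eq_smul_Y₄_of_trace_mul_kronecker_eq_zero (h₀.1.sub h₁.1) fun E F hE hF => by
      rw [sub_mul, trace_sub, hprod E F hE hF, sub_self]
  have hc : c ≠ 0 := by
    intro hc₀
    have hdist : (e₀ * (ω₀ - ω₁)).trace = 1 := by rw [mul_sub, trace_sub, hd₀₀, hd₀₁, sub_zero]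
    simp [hΔ, hc₀] at hdist
  refine ⟨⟨c, hc, hΔ⟩, fun htr => hc ?_⟩
  have hY : ((ω₀ - ω₁) * Y₄).trace = 4 * c := by
    rw [hΔ, smul_mul, Y₄_mul_self, trace_smul, trace_one]
    simp [mul_comm]
  rw [sub_mul, trace_sub, htr, sub_self] at hY
  linarith

/-- **Proposition 12 of the paper (in real quantum theory):
perfectly secure data hiding requires tomographically-nonlocal entanglement.**
If no product effect can distinguish two-rebit states ω₀, ω₁ while some joint
two-outcome measurement distinguishes them perfectly, then ω₀ − ω₁ is a nonzero
multiple of σ_y ⊗ σ_y; in particular the two states differ in their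
σ_y ⊗ σ_y component, so at least one of them carries tomographically-nonlocal
entanglement. -/
theorem stmt14 (ω₀ ω₁ : Matrix (Fin 2 × Fin 2) (Fin 2 × Fin 2) ℝ)
    (h₀ : IsTwoRebitState ω₀) (h₁ : IsTwoRebitState ω₁)
    (hprod : ∀ E F : Matrix (Fin 2) (Fin 2) ℝ, E.IsSymm → F.IsSymm →
      (ω₀ * (E ⊗ₖ F)).trace = (ω₁ * (E ⊗ₖ F)).trace)
    (e₀ e₁ : Matrix (Fin 2 × Fin 2) (Fin 2 × Fin 2) ℝ)
    (he₀s : e₀.IsSymm) (he₀ : e₀.PosSemidef)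
    (he₁s : e₁.IsSymm) (he₁ : e₁.PosSemidef)
    (hsum : e₀ + e₁ = 1)
    (hd₀₀ : (e₀ * ω₀).trace = 1) (hd₁₀ : (e₁ * ω₀).trace = 0)
    (hd₀₁ : (e₀ * ω₁).trace = 0) (hd₁₁ : (e₁ * ω₁).trace = 1) :
    (∃ c : ℝ, c ≠ 0 ∧ ω₀ - ω₁ = c • Y₄) ∧
      (ω₀ * Y₄).trace ≠ (ω₁ * Y₄).trace :=
  stmt14_general ω₀ ω₁ h₀ h₁ hprod e₀ hd₀₀ hd₀₁
end
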